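/- arXiv:2503.09397 — 2 statements merged into one kernel-verified Lean document; each statement's English description precedes it below -/
import Mathlib

section
/- Let S : [0,∞) → [0,∞) be nondecreasing with S(0) ≥ 0, and define for measurable matrix-valued v the operator (Vv)(ξ,η) = −(1/4) ∫₀^ξ ∫_ξ^η q((η₁−ξ₁)/2) v(ξ₁,η₁) dη₁ dξ₁, where S(η) = (1/2)∫₀^{η/2} ‖q(s)‖ ds. If v₀ satisfies ‖v₀(ξ,η)‖ ≤ S(η) for all 0 ≤ ξ ≤ η, then for every n ≥ 0, ‖(Vⁿ v₀)(ξ,η)‖ ≤ S(η)^{n+1} ξⁿ / n!. -/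
/-!
Induction on `m`. Each application of `V` gains one power of `ξ` and one factor of `S(η)`:
after substituting `s = (η₁ - ξ₁)/2`, the kernel `q((η₁ - ξ₁)/2)` has `L¹`-norm at most
`4 S(η - ξ₁) ≤ 4 S(η)` in `η₁ ∈ [ξ, η]`, the factor `4` cancels the `1/4` in front of `V`, the
inductive bound `S(η₁)ᵐ⁺¹ ξ₁ᵐ / m!` is at most `S(η)ᵐ⁺¹ ξ₁ᵐ / m!` by monotonicity, and integrating
`ξ₁ᵐ / m!` over `[0, ξ]` gives `ξᵐ⁺¹ / (m + 1)!`.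
-/

open MeasureTheory Set

abbrev MatC (n : ℕ) := EuclideanSpace ℂ (Fin n) →L[ℂ] EuclideanSpace ℂ (Fin n)

/-- `S(η) = (1/2)∫₀^{η/2} ‖q(s)‖ ds`. -/
noncomputable def Sfun (n : ℕ) (q : ℝ → MatC n) (η : ℝ) : ℝ :=
  (1 / 2) * ∫ s in (0:ℝ)..(η / 2), ‖q s‖

/-- The Volterra-type operator
`(Vv)(ξ,η) = −(1/4) ∫₀^ξ ∫_ξ^η q((η₁−ξ₁)/2) v(ξ₁,η₁) dη₁ dξ₁`. -/
noncomputable def Vop (n : ℕ) (q : ℝ → MatC n) (v : ℝ → ℝ → MatC n) :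
    ℝ → ℝ → MatC n :=
  fun ξ η => -((1 / 4 : ℂ) • ∫ ξ₁ in (0:ℝ)..ξ, ∫ η₁ in ξ..η, q ((η₁ - ξ₁) / 2) * v ξ₁ η₁)

section KernelNorm

variable {E : Type*} [NormedAddCommGroup E]

lemma intervalIntegrable_norm_comp_sub_div_two {q : ℝ → E}
    (hq : LocallyIntegrableOn q (Ici 0)) {a b : ℝ} (hab : a ≤ b) :
    IntervalIntegrable (fun x => ‖q ((x - a) / 2)‖) volume a b := by
  have hq' : IntervalIntegrable (fun s => ‖q s‖) volume 0 ((b - a) / 2) := by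
    refine IntegrableOn.intervalIntegrable ?_
    rw [uIcc_of_le (by linarith)]
    exact (hq.integrableOn_compact_subset Icc_subset_Ici_self isCompact_Icc).norm
  have h := (hq'.comp_mul_right (c := 1 / 2)).comp_sub_right a
  rw [zero_div, zero_add, show (b - a) / 2 / (1 / 2) + a = b by ring] at h
  simpa only [mul_one_div] using h

lemma integral_norm_comp_sub_div_two (q : ℝ → E) (a b : ℝ) :
    ∫ x in a..b, ‖q ((x - a) / 2)‖ = 2 * ∫ s in (0 : ℝ)..(b - a) / 2, ‖q s‖ := by
  rw [intervalIntegral.integral_comp_sub_right (fun x => ‖q (x / 2)‖), sub_self,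
    intervalIntegral.integral_comp_div (fun s => ‖q s‖) two_ne_zero, zero_div, smul_eq_mul]

end KernelNorm

lemma norm_integral_mul_le {A : Type*} [NormedRing A] [NormedSpace ℝ A] {k w : ℝ → A}
    {a b M : ℝ} (hab : a ≤ b) (hk : IntervalIntegrable (fun x => ‖k x‖) volume a b)
    (hw : ∀ x ∈ Ioc a b, ‖w x‖ ≤ M) :
    ‖∫ x in a..b, k x * w x‖ ≤ (∫ x in a..b, ‖k x‖) * M := by
  rw [← intervalIntegral.integral_mul_const]
  refine intervalIntegral.norm_integral_le_of_norm_le hab (ae_of_all _ fun x hx => ?_)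
    (hk.mul_const M)
  exact (norm_mul_le _ _).trans (mul_le_mul_of_nonneg_left (hw x hx) (norm_nonneg _))

lemma integral_pow_div_factorial (a : ℝ) (m : ℕ) :
    ∫ x in (0 : ℝ)..a, x ^ m / m.factorial = a ^ (m + 1) / (m + 1).factorial := by
  rw [intervalIntegral.integral_div, integral_pow, Nat.factorial_succ]
  push_cast
  field_simp
  ring

section Sfun

variable {n : ℕ} {q : ℝ → MatC n}

lemma Sfun_nonneg {η : ℝ} (hη : 0 ≤ η) : 0 ≤ Sfun n q η :=
  mul_nonneg (by norm_num)
    (intervalIntegral.integral_nonneg (by linarith) fun _ _ => norm_nonneg _)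

lemma integral_norm_kernel_le_four_mul_Sfun (hq : LocallyIntegrableOn q (Ici 0))
    (hS : MonotoneOn (Sfun n q) (Ici 0)) {ξ₁ ξ η : ℝ} (hξ₁ : 0 ≤ ξ₁) (hξ₁ξ : ξ₁ ≤ ξ)
    (hξη : ξ ≤ η) :
    ∫ x in ξ..η, ‖q ((x - ξ₁) / 2)‖ ≤ 4 * Sfun n q η := by
  calc ∫ x in ξ..η, ‖q ((x - ξ₁) / 2)‖
      ≤ ∫ x in ξ₁..η, ‖q ((x - ξ₁) / 2)‖ :=
        intervalIntegral.integral_mono_interval hξ₁ξ hξη le_rfl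
          (ae_of_all _ fun _ => norm_nonneg _)
          (intervalIntegrable_norm_comp_sub_div_two hq (hξ₁ξ.trans hξη))
    _ = 4 * Sfun n q (η - ξ₁) := by
        rw [integral_norm_comp_sub_div_two, Sfun]; ring
    _ ≤ 4 * Sfun n q η := by
        gcongr
        exact hS (mem_Ici.2 (by linarith)) (mem_Ici.2 (by linarith)) (by linarith)

lemma norm_Vop_le (hq : LocallyIntegrableOn q (Ici 0)) (hS : MonotoneOn (Sfun n q) (Ici 0))
    {w : ℝ → ℝ → MatC n} {m : ℕ}
    (hw : ∀ ξ η, 0 ≤ ξ → ξ ≤ η → ‖w ξ η‖ ≤ Sfun n q η ^ (m + 1) * ξ ^ m / m.factorial)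
    {ξ η : ℝ} (hξ : 0 ≤ ξ) (hξη : ξ ≤ η) :
    ‖Vop n q w ξ η‖ ≤ Sfun n q η ^ (m + 2) * ξ ^ (m + 1) / (m + 1).factorial := by
  have inner : ∀ ξ₁ ∈ Ioc 0 ξ, ‖∫ η₁ in ξ..η, q ((η₁ - ξ₁) / 2) * w ξ₁ η₁‖
      ≤ 4 * Sfun n q η ^ (m + 2) * (ξ₁ ^ m / m.factorial) := by
    rintro ξ₁ ⟨hξ₁, hξ₁ξ⟩
    have hw' : ∀ η₁ ∈ Ioc ξ η, ‖w ξ₁ η₁‖ ≤ Sfun n q η ^ (m + 1) * ξ₁ ^ m / m.factorial := by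
      rintro η₁ ⟨hξη₁, hη₁η⟩
      refine (hw ξ₁ η₁ hξ₁.le (by linarith)).trans ?_
      gcongr
      · exact Sfun_nonneg (by linarith)
      · exact hS (mem_Ici.2 (by linarith)) (mem_Ici.2 (by linarith)) hη₁η
    have hk := (intervalIntegrable_norm_comp_sub_div_two hq (hξ₁ξ.trans hξη)).mono_set
      (uIcc_subset_uIcc_right (by rw [uIcc_of_le (hξ₁ξ.trans hξη)]; exact ⟨hξ₁ξ, hξη⟩))
    calc _ ≤ (∫ η₁ in ξ..η, ‖q ((η₁ - ξ₁) / 2)‖) *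
            (Sfun n q η ^ (m + 1) * ξ₁ ^ m / m.factorial) := norm_integral_mul_le hξη hk hw'
      _ ≤ 4 * Sfun n q η * (Sfun n q η ^ (m + 1) * ξ₁ ^ m / m.factorial) := by
          have := Sfun_nonneg (q := q) (hξ.trans hξη)
          gcongr
          exact integral_norm_kernel_le_four_mul_Sfun hq hS hξ₁.le hξ₁ξ hξη
      _ = _ := by ring
  have outer := intervalIntegral.norm_integral_le_of_norm_le hξ (ae_of_all _ inner)
    ((by fun_prop : Continuous fun ξ₁ : ℝ => 4 * Sfun n q η ^ (m + 2) *
      (ξ₁ ^ m / m.factorial)).intervalIntegrable (μ := volume) _ _)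
  rw [intervalIntegral.integral_const_mul, integral_pow_div_factorial] at outer
  calc ‖Vop n q w ξ η‖
      = 1 / 4 * ‖∫ ξ₁ in (0 : ℝ)..ξ, ∫ η₁ in ξ..η, q ((η₁ - ξ₁) / 2) * w ξ₁ η₁‖ := by
        simp [Vop, norm_smul]
    _ ≤ 1 / 4 * (4 * Sfun n q η ^ (m + 2) * (ξ ^ (m + 1) / (m + 1).factorial)) := by gcongr
    _ = _ := by ring

end Sfun

theorem stmt4_general (n : ℕ) (q : ℝ → MatC n)
    (hq : LocallyIntegrableOn q (Ici (0 : ℝ)))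
    (hS : MonotoneOn (Sfun n q) (Ici (0 : ℝ)))
    (v₀ : ℝ → ℝ → MatC n)
    (hv₀ : ∀ ξ η : ℝ, 0 ≤ ξ → ξ ≤ η → ‖v₀ ξ η‖ ≤ Sfun n q η) :
    ∀ (m : ℕ) (ξ η : ℝ), 0 ≤ ξ → ξ ≤ η →
      ‖((Vop n q)^[m] v₀) ξ η‖ ≤ Sfun n q η ^ (m + 1) * ξ ^ m / m.factorial := by
  intro m
  induction m with
  | zero => simpa using hv₀
  | succ m ih =>
    intro ξ η hξ hξη
    rw [Function.iterate_succ_apply']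
    exact norm_Vop_le hq hS ih hξ hξη

/-- If `‖v₀(ξ,η)‖ ≤ S(η)` on the triangle `0 ≤ ξ ≤ η`, then for every
`m ≥ 0` one has `‖(Vᵐ v₀)(ξ,η)‖ ≤ S(η)^{m+1} ξᵐ / m!`. -/
theorem stmt4 (n : ℕ) (q : ℝ → MatC n)
    (hq : LocallyIntegrableOn q (Ici (0 : ℝ)))
    (hS : MonotoneOn (Sfun n q) (Ici (0 : ℝ))) (hS0 : 0 ≤ Sfun n q 0)
    (v₀ : ℝ → ℝ → MatC n)
    (hv₀ : ∀ ξ η : ℝ, 0 ≤ ξ → ξ ≤ η → ‖v₀ ξ η‖ ≤ Sfun n q η) :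
    ∀ (m : ℕ) (ξ η : ℝ), 0 ≤ ξ → ξ ≤ η →
      ‖((Vop n q)^[m] v₀) ξ η‖ ≤ Sfun n q η ^ (m + 1) * ξ ^ m / m.factorial :=
  stmt4_general n q hq hS v₀ hv₀
end

section
/- Let B be a Banach space, H a Banach space continuously embedded in B via J : H → B, and A : B → B a bounded operator such that I + A is invertible on B, A restricts to a bounded operator on H, and A³ maps B boundedly into H. Then (I + A)⁻¹ restricts to a bounded operator on H, and this restriction is the inverse of (I + A)|_H in H; in particular (I + A)|_H is an isomorphism of H. -/
/-- Abstract bootstrap: `B` a Banach space, `H` a Banach space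
continuously embedded in `B` via `J`, `A` a bounded operator on `B` such that `I + A`
is invertible on `B` (with inverse `R`), `A` restricts to a bounded operator `A'` on
`H`, and `A³` maps `B` boundedly into `H` (via `A₃`). Then `(I + A)⁻¹` restricts to a
bounded operator on `H` which inverts `(I + A)|_H`; in particular `(I + A)|_H` is an
isomorphism of `H`. -/
theorem stmt15 {B H : Type*}
    [NormedAddCommGroup B] [NormedSpace ℝ B] [CompleteSpace B]
    [NormedAddCommGroup H] [NormedSpace ℝ H] [CompleteSpace H]
    (J : H →L[ℝ] B) (hJ : Function.Injective J)
    (A : B →L[ℝ] B) (R : B →L[ℝ] B)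
    (hR1 : (1 + A) * R = 1) (hR2 : R * (1 + A) = 1)
    (A' : H →L[ℝ] H) (hA' : ∀ x : H, J (A' x) = A (J x))
    (A₃ : B →L[ℝ] H) (hA₃ : ∀ y : B, J (A₃ y) = (A ^ 3) y) :
    ∃ C : H →L[ℝ] H,
      (1 + A') * C = 1 ∧ C * (1 + A') = 1 ∧ ∀ x : H, J (C x) = R (J x) := by
  -- Neumann-type identity: R = 1 - A + A² - A³ R
  have key : R = 1 - A + A ^ 2 - A ^ 3 * R := by
    have h : (1 + A) * (1 - A + A ^ 2 - A ^ 3 * R) = 1 := by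
      calc (1 + A) * (1 - A + A ^ 2 - A ^ 3 * R)
          = 1 + A ^ 3 - A ^ 3 * ((1 + A) * R) := by noncomm_ring
        _ = 1 := by rw [hR1]; noncomm_ring
    have h2 : R * ((1 + A) * (1 - A + A ^ 2 - A ^ 3 * R)) = R := by rw [h, mul_one]
    rw [← mul_assoc, hR2, one_mul] at h2
    exact h2.symm
  set C : H →L[ℝ] H := 1 - A' + A' * A' - (A₃.comp R).comp J with hC
  have hJC : ∀ x : H, J (C x) = R (J x) := by
    intro x
    have : J (C x) = J x - A (J x) + A (A (J x)) - (A ^ 3) (R (J x)) := by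
      simp [hC, hA', hA₃, map_sub, map_add]
    rw [this]
    conv_rhs => rw [key]
    simp [ContinuousLinearMap.sub_apply, ContinuousLinearMap.add_apply,
      ContinuousLinearMap.mul_apply, pow_succ, pow_zero, ContinuousLinearMap.one_apply]
  have hJ1A : ∀ x : H, J ((1 + A') x) = (1 + A) (J x) := by
    intro x
    simp [ContinuousLinearMap.add_apply, hA']
  refine ⟨C, ?_, ?_, hJC⟩
  · ext x
    apply hJ
    have := congrFun (congrArg (fun f : B →L[ℝ] B => (f : B → B)) hR1) (J x)
    simpa [ContinuousLinearMap.mul_apply, hA', hJC] using this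
  · ext x
    apply hJ
    have := congrFun (congrArg (fun f : B →L[ℝ] B => (f : B → B)) hR2) (J x)
    simpa [ContinuousLinearMap.mul_apply, hA', hJC] using this
end
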